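/- Let A, B be n×n real symmetric matrices and let f : ℝⁿ → ℝ be a symmetric strictly Schur-convex function with F(X) = f(λ(X)). If X̄ is a global minimizer of F(X − A) over {X symmetric : λ(X) = λ(B)}, then λ(X̄ − A) = (λ(X̄) − λ(A))↓, i.e., A and X̄ strongly commute. -/

import Mathlib

open Finset

/-- Decreasing rearrangement of a vector in ℝⁿ. -/
noncomputable def dsort {n : ℕ} (u : Fin n → ℝ) : Fin n → ℝ :=
  u ∘ Tuple.sort (fun i => -u i)

/-- `Maj u v` : `u` is majorized by `v`. -/
def Maj {n : ℕ} (u v : Fin n → ℝ) : Prop :=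
  (∀ k : ℕ, ∑ i ∈ univ.filter (fun i : Fin n => (i : ℕ) < k), dsort u i ≤
      ∑ i ∈ univ.filter (fun i : Fin n => (i : ℕ) < k), dsort v i) ∧
  ∑ i, u i = ∑ i, v i

open Matrix

/-- Decreasingly ordered eigenvalue vector of a real symmetric matrix. -/
noncomputable def specVec {n : ℕ} {A : Matrix (Fin n) (Fin n) ℝ} (hA : A.IsHermitian) :
    Fin n → ℝ :=
  dsort hA.eigenvalues

/-- `A` and `B` strongly commute: a common orthonormal eigenbasis realizing both
decreasingly ordered spectra simultaneously. -/
def StrongCommute {n : ℕ} {A B : Matrix (Fin n) (Fin n) ℝ}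
    (hA : A.IsHermitian) (hB : B.IsHermitian) : Prop :=
  ∃ U : Matrix (Fin n) (Fin n) ℝ, U * Uᵀ = 1 ∧
    Uᵀ * A * U = Matrix.diagonal (specVec hA) ∧
    Uᵀ * B * U = Matrix.diagonal (specVec hB)

/-!
Diagonalize `A = U diag(λ(A)) Uᵀ` and put `X̂ = U diag(λ(B)) Uᵀ`. Then `X̂` is feasible and
`λ(X̂ - A) = (λ(X̄) - λ(A))↓`, while Lidskii's majorization `(λ(X̄) - λ(A))↓ ≺ λ(X̄ - A)` and strict
Schur-convexity give `F(X̂ - A) < F(X̄ - A)` unless the two spectra agree; optimality of `X̄` rules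
this out.

Lidskii's inequality is proved following Li and Mathias: with `μ = λₘ(M - A)` and `D` the positive
part of `M - A - μ`, one has `M ≤ A + D + μ` and `A ≤ A + D` in the Loewner order, so Weyl's
monotonicity principle bounds any `m + 1` of the differences `λᵢ(M) - λᵢ(A)` by
`tr D + (m + 1) μ = ∑_{j ≤ m} λⱼ(M - A)`.
-/

section

variable {n : ℕ}

lemma antitone_dsort (u : Fin n → ℝ) : Antitone (dsort u) := fun _ _ hij => by
  simpa [dsort, neg_le_neg_iff] using Tuple.monotone_sort (fun i => -u i) hij

lemma dsort_eq_comp_of_antitone {u : Fin n → ℝ} {σ : Equiv.Perm (Fin n)}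
    (h : Antitone (u ∘ σ)) : dsort u = u ∘ σ :=
  Tuple.unique_antitone (antitone_dsort u) h

lemma dsort_comp_perm (u : Fin n → ℝ) (σ : Equiv.Perm (Fin n)) :
    dsort (u ∘ σ) = dsort u := by
  simpa [dsort, Function.comp_def] using congrArg (fun g i => -g i)
    (Tuple.comp_perm_comp_sort_eq_comp_sort (f := fun i => -u i) (σ := σ))

lemma dsort_dsort (u : Fin n → ℝ) : dsort (dsort u) = dsort u :=
  dsort_comp_perm u _

lemma sum_dsort (u : Fin n → ℝ) : ∑ i, dsort u i = ∑ i, u i :=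
  Equiv.sum_comp _ u

lemma dsort_add_const (u : Fin n → ℝ) (c : ℝ) :
    dsort (fun i => u i + c) = fun i => dsort u i + c :=
  dsort_eq_comp_of_antitone fun _ _ hij => (add_le_add_iff_right c).2 (antitone_dsort u hij)

lemma dsort_eq_dsort_of_map_univ_eq {u v : Fin n → ℝ}
    (h : univ.val.map u = univ.val.map v) : dsort u = dsort v := by
  refine List.ofFn_injective <| List.Perm.eq_of_sortedGE (antitone_dsort u).sortedGE_ofFn
    (antitone_dsort v).sortedGE_ofFn ?_
  refine ((Equiv.Perm.ofFn_comp_perm _ u).trans ?_).trans (Equiv.Perm.ofFn_comp_perm _ v).symm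
  rwa [← Multiset.coe_eq_coe, ← Fin.univ_val_map, ← Fin.univ_val_map]

lemma Maj.dsort_left {u v : Fin n → ℝ} (h : Maj u v) : Maj (dsort u) v := by
  refine ⟨fun k => ?_, by rw [sum_dsort, h.2]⟩
  rw [dsort_dsort]
  exact h.1 k

lemma maj_of_forall_sum_le {u v : Fin n → ℝ}
    (h : ∀ S : Finset (Fin n), ∑ i ∈ S, u i ≤
      ∑ i ∈ univ.filter (fun i : Fin n => (i : ℕ) < #S), dsort v i)
    (hsum : ∑ i, u i = ∑ i, v i) : Maj u v := by
  refine ⟨fun k => ?_, hsum⟩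
  set K := univ.filter (fun i : Fin n => (i : ℕ) < k)
  have hK : univ.filter (fun i : Fin n => (i : ℕ) < #K) = K := by
    ext i
    simp only [K, Fin.card_filter_val_lt, mem_filter, mem_univ, true_and]
    omega
  have := h (K.map (Tuple.sort fun i => -u i).toEmbedding)
  rwa [sum_map, card_map, hK] at this

lemma isHermitian_conj_diagonal (U : Matrix (Fin n) (Fin n) ℝ) (d : Fin n → ℝ) :
    (U * diagonal d * Uᵀ).IsHermitian := by
  simp [Matrix.IsHermitian, Matrix.mul_assoc]

lemma posSemidef_conj_diagonal (U : Matrix (Fin n) (Fin n) ℝ) {d : Fin n → ℝ} (hd : 0 ≤ d) :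
    (U * diagonal d * Uᵀ).PosSemidef := by
  simpa using (PosSemidef.diagonal hd).mul_mul_conjTranspose_same U

lemma conj_diagonal_add_smul_one {U : Matrix (Fin n) (Fin n) ℝ} (hU : U * Uᵀ = 1)
    (d : Fin n → ℝ) (μ : ℝ) :
    U * diagonal d * Uᵀ + μ • 1 = U * diagonal (fun i => d i + μ) * Uᵀ := by
  rw [← diagonal_add, Matrix.mul_add, Matrix.add_mul, ← smul_one_eq_diagonal]
  simp [hU]

lemma conj_diagonal_comp_perm (U : Matrix (Fin n) (Fin n) ℝ) (d : Fin n → ℝ)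
    (σ : Equiv.Perm (Fin n)) :
    U.submatrix id σ * diagonal (d ∘ σ) * (U.submatrix id σ)ᵀ = U * diagonal d * Uᵀ := by
  ext i j
  simpa [Matrix.mul_apply, diagonal] using Equiv.sum_comp σ (fun k => U i k * d k * U j k)

open Polynomial in
lemma specVec_eq_dsort_of_charpoly_eq {M : Matrix (Fin n) (Fin n) ℝ} (hM : M.IsHermitian)
    {d : Fin n → ℝ} (h : M.charpoly = ∏ i, (X - C (d i))) : specVec hM = dsort d := by
  apply dsort_eq_dsort_of_map_univ_eq
  have hroots : (∏ i, (X - C (d i))).roots = univ.val.map d := by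
    rw [prod_eq_multiset_prod, ← roots_multiset_prod_X_sub_C (univ.val.map d), Multiset.map_map]
    rfl
  have := hM.roots_charpoly_eq_eigenvalues
  rw [h, hroots] at this
  simpa using this.symm

lemma specVec_of_eq_conj_diagonal {M U : Matrix (Fin n) (Fin n) ℝ} (hM : M.IsHermitian)
    (hU : U * Uᵀ = 1) {d : Fin n → ℝ} (hMU : M = U * diagonal d * Uᵀ) : specVec hM = dsort d := by
  apply specVec_eq_dsort_of_charpoly_eq
  rw [hMU, charpoly_mul_comm, ← Matrix.mul_assoc, mul_eq_one_comm.mp hU, Matrix.one_mul,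
    charpoly_diagonal]

lemma exists_conj_diagonal_specVec {M : Matrix (Fin n) (Fin n) ℝ} (hM : M.IsHermitian) :
    ∃ U : Matrix (Fin n) (Fin n) ℝ, U * Uᵀ = 1 ∧ M = U * diagonal (specVec hM) * Uᵀ := by
  set V : Matrix (Fin n) (Fin n) ℝ := ↑hM.eigenvectorUnitary
  have hV : V * Vᵀ = 1 := by
    simpa [star_eq_conjTranspose] using Unitary.mul_star_self_of_mem hM.eigenvectorUnitary.2
  have hMV : M = V * diagonal hM.eigenvalues * Vᵀ := by
    simpa [star_eq_conjTranspose] using hM.spectral_theorem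
  set σ := Tuple.sort fun i => -hM.eigenvalues i
  refine ⟨V.submatrix id σ, ?_, ?_⟩
  · simp [hV]
  · exact hMV.trans (conj_diagonal_comp_perm V _ σ).symm

lemma dsort_specVec {M : Matrix (Fin n) (Fin n) ℝ} (hM : M.IsHermitian) :
    dsort (specVec hM) = specVec hM :=
  dsort_dsort _

lemma trace_eq_sum_specVec {M : Matrix (Fin n) (Fin n) ℝ} (hM : M.IsHermitian) :
    M.trace = ∑ i, specVec hM i := by
  simpa [specVec, sum_dsort] using hM.trace_eq_sum_eigenvalues

lemma specVec_add_smul_one {M : Matrix (Fin n) (Fin n) ℝ} (hM : M.IsHermitian) (μ : ℝ)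
    (h : (M + μ • (1 : Matrix (Fin n) (Fin n) ℝ)).IsHermitian) :
    specVec h = fun i => specVec hM i + μ := by
  obtain ⟨U, hU, hUM⟩ := exists_conj_diagonal_specVec hM
  rw [specVec_of_eq_conj_diagonal h hU (d := fun i => specVec hM i + μ), dsort_add_const,
    dsort_specVec]
  nth_rw 1 [hUM]
  exact conj_diagonal_add_smul_one hU _ μ

lemma dotProduct_mulVec_conj_diagonal {U : Matrix (Fin n) (Fin n) ℝ} (hU : U * Uᵀ = 1)
    (d c : Fin n → ℝ) :
    (U *ᵥ c) ⬝ᵥ ((U * diagonal d * Uᵀ) *ᵥ (U *ᵥ c)) = ∑ j, d j * c j ^ 2 := by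
  have hU' : Uᵀ * U = 1 := mul_eq_one_comm.mp hU
  rw [mulVec_mulVec, Matrix.mul_assoc, Matrix.mul_assoc, hU', Matrix.mul_one, ← mulVec_mulVec,
    dotProduct_mulVec, ← mulVec_transpose, mulVec_mulVec, hU', one_mulVec]
  simp only [dotProduct, mulVec_diagonal]
  exact sum_congr rfl fun j _ => by ring

lemma dotProduct_mulVec_self {U : Matrix (Fin n) (Fin n) ℝ} (hU : U * Uᵀ = 1) (c : Fin n → ℝ) :
    (U *ᵥ c) ⬝ᵥ (U *ᵥ c) = ∑ j, c j ^ 2 := by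
  simpa [hU] using dotProduct_mulVec_conj_diagonal hU 1 c

lemma dotProduct_mulVec_le_of_posSemidef_sub {A B : Matrix (Fin n) (Fin n) ℝ}
    (hAB : (B - A).PosSemidef) (x : Fin n → ℝ) : x ⬝ᵥ (A *ᵥ x) ≤ x ⬝ᵥ (B *ᵥ x) := by
  simpa [sub_mulVec, dotProduct_sub] using hAB.dotProduct_mulVec_nonneg x

lemma Antitone.mul_sum_sq_le_sum_mul_sq {d : Fin n → ℝ} (hd : Antitone d) {c : Fin n → ℝ}
    {i : Fin n} (hc : ∀ j, i < j → c j = 0) : d i * ∑ j, c j ^ 2 ≤ ∑ j, d j * c j ^ 2 := by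
  rw [mul_sum]
  refine sum_le_sum fun j _ => ?_
  rcases le_or_gt j i with hji | hij
  · exact mul_le_mul_of_nonneg_right (hd hji) (sq_nonneg _)
  · simp [hc j hij]

lemma Antitone.sum_mul_sq_le_mul_sum_sq {d : Fin n → ℝ} (hd : Antitone d) {c : Fin n → ℝ}
    {i : Fin n} (hc : ∀ j, j < i → c j = 0) : ∑ j, d j * c j ^ 2 ≤ d i * ∑ j, c j ^ 2 := by
  rw [mul_sum]
  refine sum_le_sum fun j _ => ?_
  rcases le_or_gt i j with hij | hji
  · exact mul_le_mul_of_nonneg_right (hd hij) (sq_nonneg _)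
  · simp [hc j hji]

lemma exists_ne_zero_eq_zero_above_mulVec_eq_zero_below (P : Matrix (Fin n) (Fin n) ℝ)
    (i : Fin n) :
    ∃ c : Fin n → ℝ, c ≠ 0 ∧ (∀ j, i < j → c j = 0) ∧ ∀ j, j < i → (P *ᵥ c) j = 0 := by
  let g : (Fin n → ℝ) →ₗ[ℝ] ({j // j ≠ i} → ℝ) := LinearMap.pi fun j =>
    if i < j.1 then LinearMap.proj j.1 else LinearMap.proj j.1 ∘ₗ P.mulVecLin
  have hg : LinearMap.ker g ≠ ⊥ := LinearMap.ker_ne_bot_of_finrank_lt (by simp [i.pos])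
  obtain ⟨c, hc, hc0⟩ := Submodule.exists_mem_ne_zero_of_ne_bot hg
  refine ⟨c, hc0, fun j hj => ?_, fun j hj => ?_⟩
  · simpa [g, hj] using congrFun (LinearMap.mem_ker.mp hc) ⟨j, hj.ne'⟩
  · simpa [g, hj.not_gt] using congrFun (LinearMap.mem_ker.mp hc) ⟨j, hj.ne⟩

theorem specVec_le_of_posSemidef_sub {A B : Matrix (Fin n) (Fin n) ℝ} (hA : A.IsHermitian)
    (hB : B.IsHermitian) (hAB : (B - A).PosSemidef) (i : Fin n) :
    specVec hA i ≤ specVec hB i := by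
  obtain ⟨U, hU, hUA⟩ := exists_conj_diagonal_specVec hA
  obtain ⟨V, hV, hVB⟩ := exists_conj_diagonal_specVec hB
  -- `x = U c = V e` lies in the span of the top `i + 1` eigenvectors of `A`
  -- and of the bottom `n - i` eigenvectors of `B`.
  obtain ⟨c, hc, hc_top, hc_bot⟩ := exists_ne_zero_eq_zero_above_mulVec_eq_zero_below (Vᵀ * U) i
  set e := (Vᵀ * U) *ᵥ c
  have hUV : V *ᵥ e = U *ᵥ c := by
    rw [mulVec_mulVec, ← Matrix.mul_assoc, hV, Matrix.one_mul]
  have hA_quad := dotProduct_mulVec_conj_diagonal hU (specVec hA) c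
  have hB_quad := dotProduct_mulVec_conj_diagonal hV (specVec hB) e
  rw [← hUA] at hA_quad
  rw [← hVB, hUV] at hB_quad
  have hnorm : ∑ j, e j ^ 2 = ∑ j, c j ^ 2 := by
    rw [← dotProduct_mulVec_self hV, ← dotProduct_mulVec_self hU, hUV]
  have hpos : 0 < ∑ j, c j ^ 2 := by
    obtain ⟨j, hj⟩ := Function.ne_iff.mp hc
    exact sum_pos' (fun j _ => sq_nonneg (c j)) ⟨j, mem_univ j, pow_two_pos_of_ne_zero hj⟩
  refine le_of_mul_le_mul_right ?_ hpos
  calc specVec hA i * ∑ j, c j ^ 2 ≤ ∑ j, specVec hA j * c j ^ 2 :=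
        (antitone_dsort _).mul_sum_sq_le_sum_mul_sq hc_top
    _ ≤ ∑ j, specVec hB j * e j ^ 2 := by
        rw [← hA_quad, ← hB_quad]
        exact dotProduct_mulVec_le_of_posSemidef_sub hAB _
    _ ≤ specVec hB i * ∑ j, c j ^ 2 := by
        rw [← hnorm]
        exact (antitone_dsort _).sum_mul_sq_le_mul_sum_sq hc_bot

lemma sum_max_sub_add_mul {c : Fin n → ℝ} (hc : Antitone c) (m : Fin n) :
    ∑ j, max (c j - c m) 0 + ((m : ℕ) + 1) * c m = ∑ j ∈ Iic m, c j := by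
  rw [← sum_subset (subset_univ (Iic m)) fun j _ hj =>
    max_eq_right (sub_nonpos.mpr (hc (le_of_lt (by simpa using hj))))]
  rw [sum_congr rfl fun j hj => max_eq_left (sub_nonneg.mpr (hc (mem_Iic.mp hj))),
    sum_sub_distrib, sum_const, Fin.card_Iic, nsmul_eq_mul]
  push_cast
  ring

theorem sum_sub_specVec_le_sum_Iic {A M : Matrix (Fin n) (Fin n) ℝ} (hA : A.IsHermitian)
    (hM : M.IsHermitian) (m : Fin n) {S : Finset (Fin n)} (hS : #S = (m : ℕ) + 1) :
    ∑ i ∈ S, (specVec hM i - specVec hA i) ≤ ∑ i ∈ Iic m, specVec (hM.sub hA) i := by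
  obtain ⟨V, hV, hVC⟩ := exists_conj_diagonal_specVec (hM.sub hA)
  set c := specVec (hM.sub hA)
  set μ := c m
  set p : Fin n → ℝ := fun j => max (c j - μ) 0
  set D := V * diagonal p * Vᵀ
  have hD : D.PosSemidef := posSemidef_conj_diagonal V fun j => le_max_right _ _
  have hAD : (A + D).IsHermitian := hA.add hD.1
  have hADμ : (A + D + μ • (1 : Matrix (Fin n) (Fin n) ℝ)).IsHermitian :=
    hAD.add (isHermitian_one.smul (IsSelfAdjoint.all μ))
  have hM_le : ∀ i, specVec hM i ≤ specVec hAD i + μ := by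
    intro i
    have hsub : A + D + μ • 1 - M = V * diagonal (fun j => p j + μ - c j) * Vᵀ := by
      rw [show A + D + μ • 1 - M = D + μ • 1 - (M - A) by abel, hVC,
        conj_diagonal_add_smul_one hV, ← Matrix.sub_mul, ← Matrix.mul_sub, diagonal_sub]
    have := specVec_le_of_posSemidef_sub hM hADμ (hsub ▸ posSemidef_conj_diagonal V fun j => by
      simp only [Pi.zero_apply, p]
      linarith [le_max_left (c j - μ) 0]) i
    rwa [specVec_add_smul_one hAD] at this
  have hA_le : ∀ i, specVec hA i ≤ specVec hAD i :=
    specVec_le_of_posSemidef_sub hA hAD (by simpa using hD)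
  have htrace : ∑ i, (specVec hAD i - specVec hA i) = ∑ j, p j := by
    rw [sum_sub_distrib, ← trace_eq_sum_specVec, ← trace_eq_sum_specVec, trace_add,
      trace_eq_sum_specVec hD.1, specVec_of_eq_conj_diagonal hD.1 hV rfl, sum_dsort]
    ring
  calc ∑ i ∈ S, (specVec hM i - specVec hA i)
      ≤ ∑ i ∈ S, (specVec hAD i - specVec hA i + μ) :=
        sum_le_sum fun i _ => by linarith [hM_le i]
    _ = ∑ i ∈ S, (specVec hAD i - specVec hA i) + ((m : ℕ) + 1) * μ := by
        rw [sum_add_distrib, sum_const, hS, nsmul_eq_mul]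
        push_cast
        ring
    _ ≤ ∑ j, p j + ((m : ℕ) + 1) * μ := by
        rw [← htrace]
        gcongr ?_ + _
        exact sum_le_sum_of_subset_of_nonneg (subset_univ S) fun i _ _ => sub_nonneg.mpr (hA_le i)
    _ = ∑ i ∈ Iic m, c i := sum_max_sub_add_mul (antitone_dsort _) m

theorem maj_sub_specVec {A M : Matrix (Fin n) (Fin n) ℝ} (hA : A.IsHermitian)
    (hM : M.IsHermitian) : Maj (specVec hM - specVec hA) (specVec (hM.sub hA)) := by
  refine maj_of_forall_sum_le (fun S => ?_) ?_
  · rcases S.eq_empty_or_nonempty with rfl | hS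
    · simp
    have hcard := hS.card_pos
    have hle : #S ≤ n := by simpa using card_le_univ S
    set m : Fin n := ⟨#S - 1, by omega⟩
    have hIic : univ.filter (fun i : Fin n => (i : ℕ) < #S) = Iic m := by
      ext i
      simp only [mem_filter, mem_univ, true_and, mem_Iic, Fin.le_def, m]
      omega
    rw [dsort_specVec, hIic]
    exact sum_sub_specVec_le_sum_Iic hA hM m (by simp only [m]; omega)
  · simp only [Pi.sub_apply, sum_sub_distrib, ← trace_eq_sum_specVec, trace_sub]

end

theorem stmt17_general {n : ℕ} {A B Xbar : Matrix (Fin n) (Fin n) ℝ}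
    (hA : A.IsHermitian) (hB : B.IsHermitian) (hXbar : Xbar.IsHermitian)
    (f : (Fin n → ℝ) → ℝ)
    (hschur : ∀ u v : Fin n → ℝ, Maj u v → dsort u ≠ dsort v → f u < f v)
    (hspec : specVec hXbar = specVec hB)
    (hmin : ∀ (X : Matrix (Fin n) (Fin n) ℝ) (hX : X.IsHermitian),
      specVec hX = specVec hB →
      f (specVec (hXbar.sub hA)) ≤ f (specVec (hX.sub hA))) :
    specVec (hXbar.sub hA) = dsort (specVec hXbar - specVec hA) := by
  obtain ⟨U, hU, hUA⟩ := exists_conj_diagonal_specVec hA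
  set Xhat := U * diagonal (specVec hB) * Uᵀ
  have hXhat : Xhat.IsHermitian := isHermitian_conj_diagonal U _
  have hXhat_spec : specVec hXhat = specVec hB := by
    rw [specVec_of_eq_conj_diagonal hXhat hU rfl, dsort_specVec]
  have hXhatA : specVec (hXhat.sub hA) = dsort (specVec hXbar - specVec hA) := by
    refine specVec_of_eq_conj_diagonal _ hU ?_
    nth_rw 1 [hUA]
    rw [hspec, ← Matrix.sub_mul, ← Matrix.mul_sub, diagonal_sub]
    rfl
  have hopt : f (specVec (hXbar.sub hA)) ≤ f (dsort (specVec hXbar - specVec hA)) :=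
    hXhatA ▸ hmin Xhat hXhat hXhat_spec
  by_contra hne
  have hmaj := (maj_sub_specVec hA hXbar).dsort_left
  have := hschur _ _ hmaj (by rw [dsort_dsort, dsort_specVec]; exact Ne.symm hne)
  linarith

theorem stmt17 {n : ℕ} {A B Xbar : Matrix (Fin n) (Fin n) ℝ}
    (hA : A.IsHermitian) (hB : B.IsHermitian) (hXbar : Xbar.IsHermitian)
    (f : (Fin n → ℝ) → ℝ)
    (hsymm : ∀ (σ : Equiv.Perm (Fin n)) (u : Fin n → ℝ), f (u ∘ σ) = f u)
    (hschur : ∀ u v : Fin n → ℝ, Maj u v → dsort u ≠ dsort v → f u < f v)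
    (hspec : specVec hXbar = specVec hB)
    (hmin : ∀ (X : Matrix (Fin n) (Fin n) ℝ) (hX : X.IsHermitian),
      specVec hX = specVec hB →
      f (specVec (hXbar.sub hA)) ≤ f (specVec (hX.sub hA))) :
    specVec (hXbar.sub hA) = dsort (specVec hXbar - specVec hA) :=
  stmt17_general hA hB hXbar f hschur hspec hmin
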